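/- The set K_n := { β ∇(β) ∇²(β) ⋯ ∇^{n−2}(β) : β ∈ P_n^n } is a subgroup of the pure braid group P_n. -/

import Mathlib

/-! Basic setup: the braid group `B_n` as a presented group.  Generators are
indexed by `ℕ`; the generator with index `i` represents `σ_i` for
`1 ≤ i ≤ n-1`, and all generators with index `0` or `≥ n` are trivialized. -/

/-- The relators of the braid group `B_n`. -/
def braidRels (n : ℕ) : Set (FreeGroup ℕ) :=
  { r | (∃ i, 1 ≤ i ∧ i + 2 ≤ n ∧
          r = .of i * .of (i+1) * .of i * (.of (i+1) * .of i * .of (i+1))⁻¹) ∨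
        (∃ i j, 1 ≤ i ∧ i + 2 ≤ j ∧ j + 1 ≤ n ∧
          r = .of i * .of j * (.of j * .of i)⁻¹) ∨
        (∃ i, (i = 0 ∨ n ≤ i) ∧ r = .of i) }

/-- The braid group on `n` strings. -/
abbrev BraidGroup (n : ℕ) := PresentedGroup (braidRels n)

/-- The standard generator `σ_i` of `B_n` (nontrivial for `1 ≤ i ≤ n-1`). -/
def σ (n i : ℕ) : BraidGroup n := PresentedGroup.of i

/-- The transposition `(i, i+1)` of the strings `{1, …, n}`, as a permutation of `ℕ`. -/
def permOfGen (n i : ℕ) : Equiv.Perm ℕ :=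
  if 1 ≤ i ∧ i + 1 ≤ n then Equiv.swap i (i+1) else 1

theorem braidRels_lift (n : ℕ) :
    ∀ r ∈ braidRels n, FreeGroup.lift (permOfGen n) r = 1 := by
  rintro r (⟨i, h1, h2, rfl⟩ | ⟨i, j, h1, h2, h3, rfl⟩ | ⟨i, hi, rfl⟩)
  · have e1 : permOfGen n i = Equiv.swap i (i+1) := if_pos ⟨h1, by omega⟩
    have e2 : permOfGen n (i+1) = Equiv.swap (i+1) (i+2) := if_pos ⟨by omega, by omega⟩
    simp only [map_mul, map_inv, FreeGroup.lift_apply_of, e1, e2]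
    rw [mul_inv_eq_one]
    have l : Equiv.swap i (i+1) * Equiv.swap (i+1) (i+2) * Equiv.swap i (i+1)
        = Equiv.swap i (i+2) := by
      have h := Equiv.swap_mul_swap_mul_swap
        (x := i+2) (y := i+1) (z := i) (by omega) (by omega)
      rwa [Equiv.swap_comm (i+1) i, Equiv.swap_comm (i+2) (i+1)] at h
    have r : Equiv.swap (i+1) (i+2) * Equiv.swap i (i+1) * Equiv.swap (i+1) (i+2)
        = Equiv.swap i (i+2) := by
      have h := Equiv.swap_mul_swap_mul_swap
        (x := i) (y := i+1) (z := i+2) (by omega) (by omega)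
      rwa [Equiv.swap_comm (i+2) i] at h
    rw [l, r]
  · have e1 : permOfGen n i = Equiv.swap i (i+1) := if_pos ⟨h1, by omega⟩
    have e2 : permOfGen n j = Equiv.swap j (j+1) := if_pos ⟨by omega, by omega⟩
    simp only [map_mul, map_inv, FreeGroup.lift_apply_of, e1, e2]
    rw [mul_inv_eq_one]
    have hd : (Equiv.swap i (i+1)).Disjoint (Equiv.swap j (j+1)) := by
      intro x
      rcases eq_or_ne x i with rfl | hxi
      · right; exact Equiv.swap_apply_of_ne_of_ne (by omega) (by omega)
      rcases eq_or_ne x (i+1) with rfl | hxi1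
      · right; exact Equiv.swap_apply_of_ne_of_ne (by omega) (by omega)
      · left; exact Equiv.swap_apply_of_ne_of_ne hxi hxi1
    exact hd.commute
  · have h : permOfGen n i = 1 := if_neg (by omega)
    simp [h]

/-- The canonical projection `Π : B_n → S_n`, sending `σ_i` to the
transposition `(i, i+1)` (strings are `1, …, n`, permutations of `ℕ`
fixing everything else). -/
def braidPerm (n : ℕ) : BraidGroup n →* Equiv.Perm ℕ :=
  PresentedGroup.toGroup (braidRels_lift n)

theorem braidPerm_σ (n i : ℕ) : braidPerm n (σ n i) = permOfGen n i :=
  PresentedGroup.toGroup.of (braidRels_lift n)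

/-- The pure braid group `P_n = ker Π`. -/
def PureBraid (n : ℕ) : Subgroup (BraidGroup n) := (braidPerm n).ker

/-- The standard pure braid generator
`A_{ij} = σ_{j-1} ⋯ σ_{i+1} σ_i² σ_{i+1}⁻¹ ⋯ σ_{j-1}⁻¹`. -/
def A (n i : ℕ) : ℕ → BraidGroup n
  | 0 => 1
  | j+1 => if j ≤ i then σ n i ^ 2 else σ n j * A n i j * (σ n j)⁻¹

/-- The group `P_n^j` of pure `j`-braids, generated by `A_{ij}` for `1 ≤ i < j`. -/
def P (n j : ℕ) : Subgroup (BraidGroup n) :=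
  Subgroup.closure ((fun i => A n i j) '' Set.Ico 1 j)

/-- Partial sums `N_1 = n_1, N_2 = n_1+n_2, …, N_k = n_1+⋯+n_k` of a list. -/
def partialSums : List ℕ → List ℕ
  | [] => []
  | a :: l => a :: (partialSums l).map (a + ·)

/-- The permutation braid `π_{n₁…n_k}`: the product `σ_1 σ_2 ⋯ σ_{n-1}` with the
letters `σ_{N_1}, …, σ_{N_{k-1}}` omitted. -/
def piBraid (n : ℕ) (ns : List ℕ) : BraidGroup n :=
  (((List.range n).filter fun i => decide (1 ≤ i ∧ i ∉ partialSums ns)).map (σ n)).prod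

/-- The permutation braid `π_n = σ_1 σ_2 ⋯ σ_{n-1}`. -/
def piN (n : ℕ) : BraidGroup n := piBraid n [n]

/-- A braid is woven of type `(n₁, …, n_k)` if it can be written as
`π_{n₁…n_k} β_{N_1} β_{N_2} ⋯ β_{N_k}` with each `β_{N_i} ∈ P_n^{N_i}`. -/
def IsWovenOfType (n : ℕ) (ns : List ℕ) (w : BraidGroup n) : Prop :=
  ∃ b : ℕ → BraidGroup n,
    (∀ m ∈ partialSums ns, b m ∈ P n m) ∧
    w = piBraid n ns * ((partialSums ns).map b).prod

/-- `W_n^1 = π_n P_n^n`, the set of woven braids of type `(n)`. -/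
def W1 (n : ℕ) : Set (BraidGroup n) := { w | ∃ b ∈ P n n, w = piN n * b }
theorem σ_sq_mem (n i : ℕ) : σ n i ^ 2 ∈ PureBraid n := by
  have h : braidPerm n (σ n i) ^ 2 = 1 := by
    rw [braidPerm_σ]
    unfold permOfGen
    split_ifs
    · rw [sq]; exact Equiv.swap_mul_self _ _
    · simp
  simpa [PureBraid, MonoidHom.mem_ker, map_pow] using h

theorem A_mem_pure (n i j : ℕ) : A n i j ∈ PureBraid n := by
  induction j with
  | zero => exact one_mem _
  | succ j ih =>
    show A n i (j+1) ∈ _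
    rw [A]
    split_ifs
    · exact σ_sq_mem n i
    · simp only [PureBraid, MonoidHom.mem_ker, map_mul, map_inv] at ih ⊢
      simp [ih]

/-- The generator `A_{ij}` as an element of the pure braid group `P_n`. -/
def Agen (n i j : ℕ) : ↥(PureBraid n) := ⟨A n i j, A_mem_pure n i j⟩

/-- `f` is the homomorphism `∇ : P_n → P_n` of the paper, determined by
`∇(A_{1j}) = 1` and `∇(A_{ij}) = A_{i-1,j-1}` for `i ≥ 2`. -/
def IsNabla (n : ℕ) (f : ↥(PureBraid n) →* ↥(PureBraid n)) : Prop :=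
  (∀ j, 1 < j → j ≤ n → f (Agen n 1 j) = 1) ∧
  (∀ i j, 2 ≤ i → i < j → j ≤ n → f (Agen n i j) = Agen n (i-1) (j-1))

/-- Conjugation by `π_n` as a homomorphism `P_n → P_n`, `α ↦ π_n α π_n⁻¹`. -/
def conjPiHom (n : ℕ) : ↥(PureBraid n) →* ↥(PureBraid n) where
  toFun α := ⟨piN n * ↑α * (piN n)⁻¹,
    Subgroup.Normal.conj_mem (MonoidHom.normal_ker _) ↑α α.2 (piN n)⟩
  map_one' := by ext; simp
  map_mul' a b := by ext; push_cast; group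

/-- The product `β ∇(β) ∇²(β) ⋯ ∇^{m-1}(β)`. -/
def weave (n : ℕ) (f : ↥(PureBraid n) →* ↥(PureBraid n)) (m : ℕ)
    (β : ↥(PureBraid n)) : ↥(PureBraid n) :=
  ((List.range m).map fun t => (⇑f)^[t] β).prod

/-- The set `K_n = { β ∇(β) ∇²(β) ⋯ ∇^{n-2}(β) : β ∈ P_n^n }`. -/
def Kset (n : ℕ) (f : ↥(PureBraid n) →* ↥(PureBraid n)) : Set ↥(PureBraid n) :=
  { k | ∃ β : ↥(PureBraid n), (β : BraidGroup n) ∈ P n n ∧ k = weave n f (n-1) β }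

/-! Write `Φ(β) = β ∇(β) ⋯ ∇^{n-2}(β)`. Since `∇` maps `P_n^j` into `P_n^{j-1}` and
`P_n^1 = 1`, `∇^{n-1}` kills `P_n^n`; telescoping then gives `Φ(β) ∇(Φ(β))⁻¹ = β` and
`Φ(k ∇(k)⁻¹) = k ∇^{n-1}(k)⁻¹`. Hence `K_n` consists exactly of the `k` with
`k ∇(k)⁻¹ ∈ P_n^n`, `∇^{n-1}(k) = 1` and `k` normalizing `P_n^n`; the last condition holds for
`Φ(β)` because `∇^t(β) ∈ P_n^{n-t} ⊆ B_{n-1}` for `t ≥ 1`, and `B_{n-1}` normalizes `P_n^n`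
(conjugation by `σ_t` sends `A_{t,n}` to `A_{t+1,n}`, `A_{t+1,n}` to
`A_{t+1,n}⁻¹ A_{t,n} A_{t+1,n}` and fixes the other `A_{i,n}`). These conditions are
preserved by products and inverses, as `(ab) ∇(ab)⁻¹ = a (b ∇(b)⁻¹) a⁻¹ · a ∇(a)⁻¹`. -/

section IterProd

variable {G : Type*} [Group G] (f : G →* G)

def iterProd (m : ℕ) (β : G) : G :=
  ((List.range m).map fun t => f^[t] β).prod

@[simp]
theorem iterProd_zero (β : G) : iterProd f 0 β = 1 := rfl

theorem iterProd_succ (m : ℕ) (β : G) : iterProd f (m + 1) β = iterProd f m β * f^[m] β := by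
  simp [iterProd, List.range_succ]

theorem iterProd_succ' (m : ℕ) (β : G) : iterProd f (m + 1) β = β * f (iterProd f m β) := by
  simp only [iterProd, List.range_succ_eq_map, List.map_cons, List.prod_cons, map_list_prod,
    List.map_map]
  congr 3
  funext t
  exact Function.iterate_succ_apply' f t β

@[simp]
theorem iterProd_one (m : ℕ) : iterProd f m 1 = 1 := by
  simp [iterProd]

theorem iterate_iterProd (t m : ℕ) (β : G) :
    f^[t] (iterProd f m β) = iterProd f m (f^[t] β) := by
  induction m with
  | zero => simp
  | succ m ih =>
    rw [iterProd_succ, iterProd_succ, iterate_map_mul, ih, ← Function.iterate_add_apply,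
      ← Function.iterate_add_apply, Nat.add_comm]

theorem iterProd_mul_inv_map (m : ℕ) (k : G) :
    iterProd f m (k * (f k)⁻¹) = k * (f^[m] k)⁻¹ := by
  induction m with
  | zero => simp
  | succ m ih =>
    rw [iterProd_succ', ih, map_mul, map_inv, ← Function.iterate_succ_apply' f m k]
    group

theorem iterProd_mem {H : Subgroup G} {m : ℕ} {β : G} (h : ∀ t < m, f^[t] β ∈ H) :
    iterProd f m β ∈ H :=
  list_prod_mem <| by
    simp only [List.mem_map, List.mem_range]
    rintro _ ⟨t, ht, rfl⟩
    exact h t ht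

def twistedSubgroup (N : Subgroup G) (m : ℕ) : Subgroup G where
  carrier := {k | k ∈ Subgroup.normalizer (N : Set G) ∧ k * (f k)⁻¹ ∈ N ∧ f^[m] k = 1}
  one_mem' := ⟨one_mem _, by simp, iterate_map_one f m⟩
  mul_mem' := by
    rintro a b ⟨ha, ha', ha''⟩ ⟨hb, hb', hb''⟩
    refine ⟨mul_mem ha hb, ?_, by rw [iterate_map_mul, ha'', hb'', mul_one]⟩
    have e : a * b * (f (a * b))⁻¹ = a * (b * (f b)⁻¹) * a⁻¹ * (a * (f a)⁻¹) := by
      rw [map_mul]; group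
    exact e ▸ mul_mem ((Subgroup.mem_normalizer_iff.1 ha _).1 hb') ha'
  inv_mem' := by
    rintro a ⟨ha, ha', ha''⟩
    refine ⟨inv_mem ha, ?_, by rw [iterate_map_inv, ha'', inv_one]⟩
    have e : a⁻¹ * (f a⁻¹)⁻¹ = a⁻¹ * (a * (f a)⁻¹)⁻¹ * a⁻¹⁻¹ := by
      rw [map_inv]; group
    exact e ▸ (Subgroup.mem_normalizer_iff.1 (inv_mem ha) _).1 (inv_mem ha')

theorem mem_twistedSubgroup {N : Subgroup G} {m : ℕ} {k : G} :
    k ∈ twistedSubgroup f N m ↔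
      k ∈ Subgroup.normalizer (N : Set G) ∧ k * (f k)⁻¹ ∈ N ∧ f^[m] k = 1 :=
  Iff.rfl

theorem iterProd_image_eq_twistedSubgroup {N : Subgroup G} {m : ℕ}
    (h_nil : ∀ β ∈ N, f^[m] β = 1)
    (h_norm : ∀ β ∈ N, ∀ t < m, f^[t] β ∈ Subgroup.normalizer (N : Set G)) :
    iterProd f m '' N = twistedSubgroup f N m := by
  ext k
  rw [SetLike.mem_coe, mem_twistedSubgroup]
  constructor
  · rintro ⟨β, hβ, rfl⟩
    have hβk : iterProd f m β * (f (iterProd f m β))⁻¹ = β := by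
      rw [mul_inv_eq_iff_eq_mul, ← iterProd_succ', iterProd_succ, h_nil β hβ, mul_one]
    refine ⟨iterProd_mem f (h_norm β hβ), ?_, ?_⟩
    · rwa [hβk]
    · rw [iterate_iterProd, h_nil β hβ, iterProd_one]
  · rintro ⟨-, hk, hk'⟩
    exact ⟨_, hk, by rw [iterProd_mul_inv_map, hk', inv_one, mul_one]⟩

end IterProd

theorem weave_eq_iterProd {n : ℕ} (f : ↥(PureBraid n) →* ↥(PureBraid n)) (m : ℕ)
    (β : ↥(PureBraid n)) : weave n f m β = iterProd f m β :=
  rfl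

section BraidRelations

variable {n : ℕ}

theorem σ_braid {t : ℕ} (h1 : 1 ≤ t) (h2 : t + 2 ≤ n) :
    σ n t * σ n (t + 1) * σ n t = σ n (t + 1) * σ n t * σ n (t + 1) := by
  have h := PresentedGroup.one_of_mem (rels := braidRels n) (Or.inl ⟨t, h1, h2, rfl⟩)
  rwa [map_mul, map_mul, map_inv, map_mul, map_mul, mul_inv_eq_one] at h

theorem σ_eq_one {i : ℕ} (h : i = 0 ∨ n ≤ i) : σ n i = 1 :=
  PresentedGroup.one_of_mem (Or.inr (Or.inr ⟨i, h, rfl⟩))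

theorem σ_commute {i j : ℕ} (h : i + 2 ≤ j) : Commute (σ n i) (σ n j) := by
  rcases Nat.eq_zero_or_pos i with rfl | hi
  · rw [σ_eq_one (Or.inl rfl)]; exact Commute.one_left _
  rcases le_or_gt (j + 1) n with hj | hj
  · have hc := PresentedGroup.one_of_mem (rels := braidRels n)
      (Or.inr (Or.inl ⟨i, j, hi, h, hj, rfl⟩))
    rwa [map_mul, map_inv, map_mul, map_mul, mul_inv_eq_one] at hc
  · rw [σ_eq_one (Or.inr (by omega : n ≤ j))]; exact Commute.one_right _

theorem A_succ_of_lt {i m : ℕ} (h : i < m) :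
    A n i (m + 1) = σ n m * A n i m * (σ n m)⁻¹ := by
  rw [A, if_neg (by omega)]

theorem A_succ_self (i : ℕ) : A n i (i + 1) = σ n i ^ 2 := by
  rw [A, if_pos le_rfl]

theorem commute_σ_A_of_add_two_le {t i : ℕ} (h : t + 2 ≤ i) (m : ℕ) :
    Commute (σ n t) (A n i m) := by
  induction m with
  | zero => exact Commute.one_right _
  | succ j ih =>
    rw [A]
    split_ifs
    · exact (σ_commute h).pow_right 2
    · have hj := σ_commute (n := n) (by omega : t + 2 ≤ j)
      exact (hj.mul_right ih).mul_right hj.inv_right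

theorem commute_σ_A_of_lt {t i m : ℕ} (h : i + 2 ≤ t) (hm : m < t) :
    Commute (σ n t) (A n i m) := by
  induction m with
  | zero => exact Commute.one_right _
  | succ j ih =>
    rw [A]
    split_ifs
    · exact (σ_commute h).symm.pow_right 2
    · have hj := (σ_commute (n := n) (by omega : j + 2 ≤ t)).symm
      exact (hj.mul_right (ih (by omega))).mul_right hj.inv_right

end BraidRelations

section BraidIdentities

variable {G : Type*} [Group G] {x y : G}

theorem mul_mul_inv_of_braid (h : x * y * x = y * x * y) : x * y * x⁻¹ = y⁻¹ * x * y :=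
  calc x * y * x⁻¹ = y⁻¹ * (y * x * y) * x⁻¹ := by group
    _ = y⁻¹ * x * y := by rw [← h]; group

theorem conj_conj_sq_of_braid (h : x * y * x = y * x * y) :
    x * (y * (x * x) * y⁻¹) * x⁻¹ = y * y :=
  calc x * (y * (x * x) * y⁻¹) * x⁻¹ = (x * y * x) * (x * y * x⁻¹)⁻¹ := by group
    _ = y * y := by rw [h, mul_mul_inv_of_braid h]; group

theorem conj_sq_of_braid (h : x * y * x = y * x * y) :
    x * (y * y) * x⁻¹ = y⁻¹ * (x * x) * y :=
  calc x * (y * y) * x⁻¹ = (x * y * x⁻¹) * (x * y * x⁻¹) := by group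
    _ = y⁻¹ * (x * x) * y := by rw [mul_mul_inv_of_braid h]; group

theorem conj_conj_conj_of_braid {a : G} (h : x * y * x = y * x * y) (ha : Commute y a) :
    x * (y * (x * a * x⁻¹) * y⁻¹) * x⁻¹ = y * (x * a * x⁻¹) * y⁻¹ :=
  calc x * (y * (x * a * x⁻¹) * y⁻¹) * x⁻¹ = (x * y * x) * a * (x * y * x)⁻¹ := by group
    _ = y * x * (y * a * y⁻¹) * x⁻¹ * y⁻¹ := by rw [h]; group
    _ = y * (x * a * x⁻¹) * y⁻¹ := by rw [ha.mul_inv_cancel]; group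

theorem conj_conj_of_commute {g s a b : G} (hc : Commute g s) (h : g * a * g⁻¹ = b) :
    g * (s * a * s⁻¹) * g⁻¹ = s * b * s⁻¹ :=
  calc g * (s * a * s⁻¹) * g⁻¹ = (g * s) * a * (g * s)⁻¹ := by group
    _ = s * (g * a * g⁻¹) * s⁻¹ := by rw [hc.eq]; group
    _ = s * b * s⁻¹ := by rw [h]

theorem Subgroup.mem_normalizer_closure_of_conj {S : Set G} {g : G}
    (h₁ : ∀ s ∈ S, g * s * g⁻¹ ∈ Subgroup.closure S)
    (h₂ : ∀ s ∈ S, ∃ p ∈ Subgroup.closure S, g * p * g⁻¹ = s) :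
    g ∈ Subgroup.normalizer (Subgroup.closure S : Set G) := by
  rw [Subgroup.mem_normalizer_iff_map_conj_eq, MonoidHom.map_closure]
  refine le_antisymm ((Subgroup.closure_le _).2 ?_) ?_
  · rintro _ ⟨s, hs, rfl⟩
    exact h₁ s hs
  · rw [Subgroup.closure_le, ← MonoidHom.map_closure]
    exact h₂

end BraidIdentities

section Conjugation

variable {n t : ℕ}

theorem σ_conj_A_self {m : ℕ} (h1 : 1 ≤ t) (h2 : t + 2 ≤ n) (hm : t + 2 ≤ m) :
    σ n t * A n t m * (σ n t)⁻¹ = A n (t + 1) m := by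
  induction m, hm using Nat.le_induction with
  | base =>
    rw [A_succ_of_lt (by omega : t < t + 1), A_succ_self, A_succ_self, pow_two, pow_two]
    exact conj_conj_sq_of_braid (σ_braid h1 h2)
  | succ m hm ih =>
    rw [A_succ_of_lt (by omega : t < m), A_succ_of_lt (by omega : t + 1 < m)]
    exact conj_conj_of_commute (σ_commute (by omega)) ih

theorem σ_conj_A_succ {m : ℕ} (h1 : 1 ≤ t) (h2 : t + 2 ≤ n) (hm : t + 2 ≤ m) :
    σ n t * A n (t + 1) m * (σ n t)⁻¹ = (A n (t + 1) m)⁻¹ * A n t m * A n (t + 1) m := by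
  induction m, hm using Nat.le_induction with
  | base =>
    rw [A_succ_of_lt (by omega : t < t + 1), A_succ_self, A_succ_self, pow_two, pow_two,
      conj_sq_of_braid (σ_braid h1 h2)]
    group
  | succ m hm ih =>
    rw [A_succ_of_lt (by omega : t < m), A_succ_of_lt (by omega : t + 1 < m),
      conj_conj_of_commute (σ_commute (by omega)) ih]
    group

theorem σ_conj_A_of_lt {i m : ℕ} (h1 : 1 ≤ t) (h2 : t + 2 ≤ n) (hi : i < t)
    (hm : t + 2 ≤ m) :
    σ n t * A n i m * (σ n t)⁻¹ = A n i m := by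
  induction m, hm using Nat.le_induction with
  | base =>
    rw [A_succ_of_lt (by omega : i < t + 1), A_succ_of_lt (by omega : i < t)]
    exact conj_conj_conj_of_braid (σ_braid h1 h2) (commute_σ_A_of_lt (by omega) (by omega))
  | succ m hm ih =>
    rw [A_succ_of_lt (by omega : i < m)]
    exact conj_conj_of_commute (σ_commute (by omega)) ih

theorem σ_conj_A_of_ne {i m : ℕ} (h1 : 1 ≤ t) (h2 : t + 2 ≤ n) (hi : i ≠ t) (hi' : i ≠ t + 1)
    (hm : t + 2 ≤ m) :
    σ n t * A n i m * (σ n t)⁻¹ = A n i m := by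
  rcases lt_or_gt_of_ne hi with hlt | hgt
  · exact σ_conj_A_of_lt h1 h2 hlt hm
  · exact (commute_σ_A_of_add_two_le (by omega) m).mul_inv_cancel

theorem A_mem_P {i : ℕ} (hi : 1 ≤ i) (hin : i < n) : A n i n ∈ P n n :=
  Subgroup.subset_closure ⟨i, ⟨hi, hin⟩, rfl⟩

theorem σ_mem_normalizer_P (h1 : 1 ≤ t) (h2 : t + 2 ≤ n) :
    σ n t ∈ Subgroup.normalizer (P n n : Set (BraidGroup n)) := by
  have hA := σ_conj_A_self h1 h2 h2
  have hA' := σ_conj_A_succ h1 h2 h2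
  have hP : A n t n ∈ P n n := A_mem_P h1 (by omega)
  have hP' : A n (t + 1) n ∈ P n n := A_mem_P (by omega) (by omega)
  apply Subgroup.mem_normalizer_closure_of_conj
  · rintro _ ⟨i, ⟨hi, hin⟩, rfl⟩
    by_cases hit : i = t
    · subst hit; rw [hA]; exact hP'
    by_cases hit' : i = t + 1
    · subst hit'; rw [hA']; exact mul_mem (mul_mem (inv_mem hP') hP) hP'
    · rw [σ_conj_A_of_ne h1 h2 hit hit' h2]; exact A_mem_P hi hin
  · rintro _ ⟨i, ⟨hi, hin⟩, rfl⟩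
    by_cases hit : i = t
    · subst hit
      refine ⟨A n i n * A n (i + 1) n * (A n i n)⁻¹,
        mul_mem (mul_mem hP hP') (inv_mem hP), ?_⟩
      calc σ n i * (A n i n * A n (i + 1) n * (A n i n)⁻¹) * (σ n i)⁻¹
          = (σ n i * A n i n * (σ n i)⁻¹) * (σ n i * A n (i + 1) n * (σ n i)⁻¹) *
              (σ n i * A n i n * (σ n i)⁻¹)⁻¹ := by group
        _ = A n i n := by rw [hA, hA']; group
    by_cases hit' : i = t + 1
    · subst hit'; exact ⟨_, hP, hA⟩
    · exact ⟨_, A_mem_P hi hin, σ_conj_A_of_ne h1 h2 hit hit' h2⟩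

end Conjugation

section PureSubgroups

variable {n : ℕ}

/-- The copy of `B_{n-1}` in `B_n`. -/
def braidSubgroup (n : ℕ) : Subgroup (BraidGroup n) :=
  Subgroup.closure (σ n '' Set.Ico 1 (n - 1))

theorem braidSubgroup_le_normalizer_P :
    braidSubgroup n ≤ Subgroup.normalizer (P n n : Set (BraidGroup n)) :=
  (Subgroup.closure_le _).2 fun _ ⟨t, ⟨h1, h2⟩, ht⟩ =>
    ht ▸ σ_mem_normalizer_P h1 (by omega)

theorem A_mem_braidSubgroup {i j : ℕ} (hi : 1 ≤ i) (hij : i < j) (hj : j < n) :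
    A n i j ∈ braidSubgroup n := by
  have hσ {s : ℕ} (h1 : 1 ≤ s) (h2 : s + 2 ≤ n) : σ n s ∈ braidSubgroup n :=
    Subgroup.subset_closure ⟨s, ⟨h1, by omega⟩, rfl⟩
  induction j with
  | zero => omega
  | succ j ih =>
    rcases Nat.lt_succ_iff_lt_or_eq.1 hij with hij | rfl
    · rw [A_succ_of_lt hij]
      exact mul_mem (mul_mem (hσ (by omega) (by omega)) (ih hij (by omega)))
        (inv_mem (hσ (by omega) (by omega)))
    · rw [A_succ_self]
      exact pow_mem (hσ hi (by omega)) 2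

theorem P_le_braidSubgroup {j : ℕ} (hj : j < n) : P n j ≤ braidSubgroup n :=
  (Subgroup.closure_le _).2 fun _ ⟨_, ⟨hi, hij⟩, hA⟩ => hA ▸ A_mem_braidSubgroup hi hij hj

def pureP (n j : ℕ) : Subgroup ↥(PureBraid n) :=
  Subgroup.closure ((fun i => Agen n i j) '' Set.Ico 1 j)

theorem mem_pureP_iff {j : ℕ} {x : ↥(PureBraid n)} :
    x ∈ pureP n j ↔ (x : BraidGroup n) ∈ P n j := by
  have h : (pureP n j).map (PureBraid n).subtype = P n j := by
    rw [pureP, MonoidHom.map_closure, Set.image_image, P]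
    rfl
  rw [← h]
  exact (Subgroup.mem_map_iff_mem (PureBraid n).subtype_injective).symm

theorem pureP_eq_bot {j : ℕ} (hj : j ≤ 1) : pureP n j = ⊥ := by
  rw [pureP, Set.Ico_eq_empty (by omega), Set.image_empty, Subgroup.closure_empty]

theorem pureP_le_normalizer {j : ℕ} (hj : j < n) :
    pureP n j ≤ Subgroup.normalizer (pureP n n : Set ↥(PureBraid n)) := by
  intro x hx
  have hxN := braidSubgroup_le_normalizer_P (P_le_braidSubgroup hj (mem_pureP_iff.1 hx))
  exact Subgroup.mem_normalizer_iff.2 fun y => by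
    simpa only [mem_pureP_iff, Subgroup.coe_mul, Subgroup.coe_inv] using
      Subgroup.mem_normalizer_iff.1 hxN y

theorem IsNabla.mem_pureP_pred {f : ↥(PureBraid n) →* ↥(PureBraid n)} (hf : IsNabla n f)
    {j : ℕ} (hj : j ≤ n) {x : ↥(PureBraid n)} (hx : x ∈ pureP n j) : f x ∈ pureP n (j - 1) := by
  suffices (pureP n j).map f ≤ pureP n (j - 1) from this ⟨x, hx, rfl⟩
  rw [pureP, MonoidHom.map_closure, Subgroup.closure_le, Set.image_image]
  rintro _ ⟨i, ⟨hi, hij⟩, rfl⟩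
  dsimp only
  rcases hi.eq_or_lt with rfl | hi
  · rw [hf.1 j hij hj]
    exact one_mem _
  · rw [hf.2 i j hi hij hj]
    exact Subgroup.subset_closure ⟨i - 1, ⟨by omega, by omega⟩, rfl⟩

theorem IsNabla.iterate_mem_pureP {f : ↥(PureBraid n) →* ↥(PureBraid n)} (hf : IsNabla n f)
    {x : ↥(PureBraid n)} (hx : x ∈ pureP n n) (t : ℕ) : f^[t] x ∈ pureP n (n - t) := by
  induction t with
  | zero => exact hx
  | succ t ih =>
    rw [Function.iterate_succ_apply', Nat.sub_succ]
    exact hf.mem_pureP_pred (Nat.sub_le n t) ih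

end PureSubgroups

theorem Kset_is_subgroup_general (n : ℕ)
    (nabla : ↥(PureBraid n) →* ↥(PureBraid n)) (hnabla : IsNabla n nabla) :
    ∃ K : Subgroup ↥(PureBraid n), (K : Set ↥(PureBraid n)) = Kset n nabla := by
  have h_nil : ∀ β ∈ pureP n n, nabla^[n - 1] β = 1 := fun β hβ => by
    simpa [pureP_eq_bot (show n - (n - 1) ≤ 1 by omega)] using
      hnabla.iterate_mem_pureP hβ (n - 1)
  have h_norm : ∀ β ∈ pureP n n, ∀ t < n - 1,
      nabla^[t] β ∈ Subgroup.normalizer (pureP n n : Set ↥(PureBraid n)) := by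
    intro β hβ t ht
    rcases Nat.eq_zero_or_pos t with rfl | ht0
    · exact Subgroup.le_normalizer hβ
    · exact pureP_le_normalizer (by omega) (hnabla.iterate_mem_pureP hβ t)
  refine ⟨twistedSubgroup nabla (pureP n n) (n - 1), ?_⟩
  rw [← iterProd_image_eq_twistedSubgroup nabla h_nil h_norm]
  ext k
  simp only [Set.mem_image, SetLike.mem_coe, mem_pureP_iff, Kset, Set.mem_ofPred_eq,
    weave_eq_iterProd, eq_comm]

/-- The set `K_n = { β ∇(β) ∇²(β) ⋯ ∇^{n-2}(β) : β ∈ P_n^n }`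
is a subgroup of the pure braid group `P_n`. -/
theorem Kset_is_subgroup (n : ℕ) (hn : 2 ≤ n)
    (nabla : ↥(PureBraid n) →* ↥(PureBraid n)) (hnabla : IsNabla n nabla) :
    ∃ K : Subgroup ↥(PureBraid n), (K : Set ↥(PureBraid n)) = Kset n nabla :=
  Kset_is_subgroup_general n nabla hnabla
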